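/- arXiv:2108.07587 — 2 statements merged into one kernel-verified Lean document; each statement's English description precedes it below -/
import Mathlib

section
/- The operators T_i = id^{⊗(i-1)} ⊗ T ⊗ id^{⊗(r-i-1)} on V^{⊗r} (where T acts on the i-th and (i+1)-st tensor factors by the q-swap rule) satisfy the braid relation T_i T_{i+1} T_i = T_{i+1} T_i T_{i+1} for 1 ≤ i ≤ r-2. -/
set_option maxHeartbeats 1000000
set_option synthInstance.maxHeartbeats 1000000

noncomputable section

abbrev Kq : Type := RatFunc ℚ

def q : Kq := RatFunc.X

/-- The tensor power `V^{⊗r}` of the `n`-dimensional space `V`, realized as the free module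
on the basis `M_f = v_{f(1)} ⊗ … ⊗ v_{f(r)}`, indexed by functions `f : {1,…,r} → {1,…,n}`. -/
abbrev Vr (n r : ℕ) := (Fin r → Fin n) → Kq

/-- The basis `M_f` of `V^{⊗r}`. -/
def bVr (n r : ℕ) : Module.Basis (Fin r → Fin n) Kq (Vr n r) := Pi.basisFun Kq _

/-- The operator `T_i = id^{⊗(i-1)} ⊗ T ⊗ id^{⊗(r-i-1)}` acting on the adjacent tensor factors
at (0-indexed) positions `a, a+1` by the q-swap rule: on a basis tensor `M_f` it gives
`M_{s f}` if `f(a) < f(a+1)`, `M_{s f} + (q⁻¹-q) M_f` if `f(a) > f(a+1)`, and `q⁻¹ M_f` if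
`f(a) = f(a+1)`, where `s` swaps positions `a` and `a+1`. -/
def Tq (n r a : ℕ) (ha : a + 1 < r) : Module.End Kq (Vr n r) :=
  (bVr n r).constr Kq fun f =>
    let pa : Fin r := ⟨a, Nat.lt_of_succ_lt ha⟩
    let pb : Fin r := ⟨a + 1, ha⟩
    if f pa < f pb then bVr n r (f ∘ Equiv.swap pa pb)
    else if f pb < f pa then bVr n r (f ∘ Equiv.swap pa pb) + (q⁻¹ - q) • bVr n r f
    else q⁻¹ • bVr n r f

/-!
Both sides of the braid relation only move the letters of a basis tensor in three positions, so
it is checked on basis tensors by cases on the relative order of those three letters. On words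
with three distinct letters or one letter it is a permutation identity; on words with two distinct
letters it reduces to the Hecke relation `q⁻¹ (q⁻¹ - (q⁻¹ - q)) = 1`.
-/

section QSwap

variable {K M ι α : Type*} [CommRing K] [AddCommGroup M] [Module K M]
  [DecidableEq ι] [LinearOrder α] {b : Module.Basis (ι → α) K M} {u c : K}

variable (b u c) in
def qSwap (i j : ι) : Module.End K M :=
  b.constr K fun f =>
    if f i < f j then b (f ∘ Equiv.swap i j)
    else if f j < f i then b (f ∘ Equiv.swap i j) + c • b f
    else u • b f

theorem qSwap_basis (i j : ι) (f : ι → α) :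
    qSwap b u c i j (b f) =
      if f i < f j then b (f ∘ Equiv.swap i j)
      else if f j < f i then b (f ∘ Equiv.swap i j) + c • b f
      else u • b f :=
  b.constr_basis K _ f

omit [LinearOrder α] in
theorem comp_swap_comp_swap (f : ι → α) (i j : ι) :
    (f ∘ Equiv.swap i j) ∘ Equiv.swap i j = f := by
  ext x
  simp

omit [LinearOrder α] in
theorem comp_swap_braid {i j k : ι} (hij : i ≠ j) (hjk : j ≠ k) (hik : i ≠ k) (f : ι → α) :
    ((f ∘ Equiv.swap i j) ∘ Equiv.swap j k) ∘ Equiv.swap i j =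
      ((f ∘ Equiv.swap j k) ∘ Equiv.swap i j) ∘ Equiv.swap j k := by
  ext x
  simp only [Function.comp_apply, Equiv.swap_apply_def]
  split_ifs <;> simp_all

theorem qSwap_braid (hu : u * (u - c) = 1) {i j k : ι} (hij : i ≠ j) (hjk : j ≠ k)
    (hik : i ≠ k) :
    qSwap b u c i j * qSwap b u c j k * qSwap b u c i j =
      qSwap b u c j k * qSwap b u c i j * qSwap b u c j k := by
  refine b.ext fun f => ?_
  have braid := comp_swap_braid hij hjk hik f
  rcases lt_trichotomy (f i) (f j) with h₁ | h₁ | h₁ <;>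
  rcases lt_trichotomy (f j) (f k) with h₂ | h₂ | h₂ <;>
  rcases lt_trichotomy (f i) (f k) with h₃ | h₃ | h₃ <;>
  try (exfalso; order)
  all_goals
    simp only [qSwap_basis, Module.End.mul_apply, map_add, map_smul, smul_add, Function.comp_apply,
      Equiv.swap_apply_left, Equiv.swap_apply_right, Equiv.swap_apply_of_ne_of_ne,
      comp_swap_comp_swap, braid, hij, hik, hjk.symm, hik.symm, ne_eq, not_false_eq_true,
      h₁, h₂, h₃, lt_asymm, lt_self_iff_false, ↓reduceIte, add_right_inj] <;>
    match_scalars <;> grind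

end QSwap

theorem Tq_eq_qSwap (n r a : ℕ) (ha : a + 1 < r) :
    Tq n r a ha = qSwap (bVr n r) q⁻¹ (q⁻¹ - q) ⟨a, by omega⟩ ⟨a + 1, ha⟩ :=
  rfl

/-- The operators `T_i` satisfy the braid relation `T_i T_{i+1} T_i = T_{i+1} T_i T_{i+1}`. -/
theorem stmt3 (n r a : ℕ) (ha : a + 2 < r) :
    Tq n r a (by omega) * Tq n r (a + 1) ha * Tq n r a (by omega) =
      Tq n r (a + 1) ha * Tq n r a (by omega) * Tq n r (a + 1) ha := by
  have hq : q⁻¹ * (q⁻¹ - (q⁻¹ - q)) = 1 := by simp [q, RatFunc.X_ne_zero]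
  simp only [Tq_eq_qSwap]
  exact qSwap_braid hq (by simp) (by simp) (by simp only [ne_eq, Fin.mk.injEq]; omega)
end
end

section
/- The assignment M_f · T_{s_i} = M_{s_i f} if f(i) < f(i+1), M_f · T_{s_i} = M_{s_i f} + (q^{-1}-q) M_f if f(i) > f(i+1), and M_f · T_{s_i} = q^{-1} M_f if f(i) = f(i+1), extends to a well-defined right action of the Hecke algebra H_q(S_r) on V^{⊗r}. -/
set_option maxHeartbeats 1000000
set_option synthInstance.maxHeartbeats 1000000

noncomputable section

open FreeAlgebra

/-- The defining relations of the Hecke algebra `H_q(S_r)`. -/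
inductive HeckeRel (r : ℕ) : FreeAlgebra Kq (Fin (r - 1)) → FreeAlgebra Kq (Fin (r - 1)) → Prop
  | quad (i : Fin (r - 1)) :
      HeckeRel r ((ι Kq i + q • 1) * (ι Kq i - q⁻¹ • 1)) 0
  | braid (i j : Fin (r - 1)) (h : (i : ℕ) + 1 = j) :
      HeckeRel r (ι Kq i * ι Kq j * ι Kq i) (ι Kq j * ι Kq i * ι Kq j)
  | comm (i j : Fin (r - 1)) (h : (i : ℕ) + 1 < j) :
      HeckeRel r (ι Kq i * ι Kq j) (ι Kq j * ι Kq i)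

/-- The Hecke algebra `H_q(S_r)` over `ℚ(q)`. -/
abbrev Hecke (r : ℕ) := RingQuot (HeckeRel r)

/-- The generator `T_{s_i}` of the Hecke algebra (`i` 0-indexed). -/
def T (r : ℕ) (i : Fin (r - 1)) : Hecke r :=
  RingQuot.mkAlgHom Kq (HeckeRel r) (ι Kq i)

/-!
For positions `a ≠ b` the rule defines an operator `E_{ab}` preserving each span of `M_f` and
`M_{f ∘ (a b)}`, where it is the block `(q⁻¹)` if `f a = f b` and `[[0, 1], [1, q⁻¹ - q]]`
otherwise; both satisfy `E² = (q⁻¹ - q) E + 1`. Operators for disjoint pairs commute because the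
two swaps commute and read disjoint coordinates, and the braid relation for `E_{ab}, E_{bc}` only
involves the relative order of `f a, f b, f c`. All defining relations of `H_q(S_r)` are
invariant under reversing products, so the generators also satisfy them in the opposite algebra.
-/

theorem comp_swap_eq_self_iff {ι β : Type*} [DecidableEq ι] (f : ι → β) (a b : ι) :
    f ∘ Equiv.swap a b = f ↔ f a = f b := by
  refine ⟨fun h => by simpa using (congrFun h a).symm, fun h => funext fun x => ?_⟩
  rcases eq_or_ne x a with rfl | hxa
  · simp [h]
  rcases eq_or_ne x b with rfl | hxb
  · simp [h]
  simp [Equiv.swap_apply_of_ne_of_ne hxa hxb]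

theorem add_smul_one_mul_sub_inv_smul_one_eq_zero {K A : Type*} [Field K] [Ring A] [Algebra K A]
    {q : K} (hq : q ≠ 0) {x : A} (hx : x * x = (q⁻¹ - q) • x + 1) :
    (x + q • 1) * (x - q⁻¹ • 1) = 0 := by
  rw [add_mul, mul_sub, mul_sub, hx]
  simp only [mul_smul_comm, smul_mul_assoc, mul_one, one_mul, smul_smul]
  match_scalars <;> field_simp <;> ring

namespace QSwap

variable {K ι α : Type*} [Field K] [DecidableEq ι] [LinearOrder α]

-- `qSwap q a b v g` is the `M_g`-coordinate of the image of `v`; transposing gives the rule on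
-- basis vectors (`qSwap_single`).
def qSwap (q : K) (a b : ι) : Module.End K ((ι → α) → K) where
  toFun v g :=
    if g a = g b then q⁻¹ * v g
    else if g b < g a then v (g ∘ Equiv.swap a b) + (q⁻¹ - q) * v g
    else v (g ∘ Equiv.swap a b)
  map_add' u v := by funext g; simp only [Pi.add_apply]; split_ifs <;> ring
  map_smul' c v := by
    funext g; simp only [Pi.smul_apply, smul_eq_mul, RingHom.id_apply]; split_ifs <;> ring

theorem qSwap_apply (q : K) (a b : ι) (v : (ι → α) → K) (g : ι → α) :
    qSwap q a b v g =
      if g a = g b then q⁻¹ * v g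
      else if g b < g a then v (g ∘ Equiv.swap a b) + (q⁻¹ - q) * v g
      else v (g ∘ Equiv.swap a b) := rfl

theorem qSwap_mul_self {q : K} (hq : q ≠ 0) (a b : ι) :
    qSwap (α := α) q a b * qSwap q a b = (q⁻¹ - q) • qSwap q a b + 1 := by
  ext v g
  simp only [Module.End.mul_apply, LinearMap.add_apply, LinearMap.smul_apply,
    Module.End.one_apply, Pi.add_apply, Pi.smul_apply, smul_eq_mul, qSwap_apply,
    Function.comp_apply, Equiv.swap_apply_left, Equiv.swap_apply_right, Function.comp_assoc,
    ← Equiv.Perm.coe_mul, Equiv.swap_mul_self, Equiv.Perm.coe_one, Function.comp_id]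
  grind

theorem qSwap_commute (q : K) {a b c d : ι} (hac : a ≠ c) (had : a ≠ d) (hbc : b ≠ c)
    (hbd : b ≠ d) : Commute (qSwap (α := α) q a b) (qSwap q c d) := by
  have hperm : Equiv.swap a b * Equiv.swap c d = Equiv.swap c d * Equiv.swap a b := by
    rw [Equiv.mul_swap_eq_swap_mul, Equiv.swap_apply_of_ne_of_ne hac.symm hbc.symm,
      Equiv.swap_apply_of_ne_of_ne had.symm hbd.symm]
  ext v g
  simp only [Module.End.mul_apply, qSwap_apply, Function.comp_apply, Function.comp_assoc,
    Equiv.swap_apply_of_ne_of_ne, hac, had, hbc, hbd, hac.symm, had.symm, hbc.symm, hbd.symm,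
    ne_eq, not_false_eq_true, ← Equiv.Perm.coe_mul, hperm]
  grind

theorem qSwap_braid {q : K} (hq : q ≠ 0) {a b c : ι} (hab : a ≠ b) (hbc : b ≠ c) (hac : a ≠ c) :
    qSwap (α := α) q a b * qSwap q b c * qSwap q a b =
      qSwap q b c * qSwap q a b * qSwap q b c := by
  have hperm : Equiv.swap a b * Equiv.swap b c * Equiv.swap a b =
      Equiv.swap b c * Equiv.swap a b * Equiv.swap b c := by
    rw [Equiv.swap_mul_swap_mul_swap hab hac, Equiv.swap_comm a b, Equiv.swap_comm b c,
      Equiv.swap_mul_swap_mul_swap hbc.symm hac.symm, Equiv.swap_comm]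
  ext v g
  simp only [Module.End.mul_apply, qSwap_apply, Function.comp_apply, Function.comp_assoc,
    Equiv.swap_apply_of_ne_of_ne, hab, hac, hab.symm, hac.symm, hbc.symm, ne_eq,
    not_false_eq_true, ← Equiv.Perm.coe_mul, hperm, Equiv.swap_apply_left, Equiv.swap_apply_right,
    Equiv.swap_mul_self, Equiv.Perm.coe_one, Function.comp_id, Equiv.Perm.mul_apply]
  grind

theorem qSwap_single [DecidableEq (ι → α)] (q : K) (a b : ι) (f : ι → α) :
    qSwap q a b (Pi.single f 1) =
      if f a < f b then Pi.single (f ∘ Equiv.swap a b) 1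
      else if f b < f a then Pi.single (f ∘ Equiv.swap a b) 1 + (q⁻¹ - q) • Pi.single f 1
      else q⁻¹ • Pi.single f 1 := by
  ext g
  have hswap : g ∘ Equiv.swap a b = f ↔ g = f ∘ Equiv.swap a b := by
    simpa only [Equiv.symm_swap] using Equiv.comp_symm_eq (Equiv.swap a b) f g
  simp only [qSwap_apply, Pi.single_apply, hswap, ite_apply, Pi.add_apply, Pi.smul_apply,
    smul_eq_mul]
  by_cases hg : g = f ∘ Equiv.swap a b
  · subst hg
    simp only [comp_swap_eq_self_iff, Function.comp_apply, Equiv.swap_apply_left,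
      Equiv.swap_apply_right]
    grind
  · grind

end QSwap

open QSwap

theorem q_ne_zero : q ≠ 0 := RatFunc.X_ne_zero

def heckeGen (n r : ℕ) (i : Fin (r - 1)) : (Module.End Kq (Vr n r))ᵐᵒᵖ :=
  MulOpposite.op (qSwap q ⟨i, by omega⟩ ⟨i + 1, by omega⟩)

theorem lift_heckeGen_eq_of_heckeRel {n r : ℕ} {x y : FreeAlgebra Kq (Fin (r - 1))}
    (h : HeckeRel r x y) : lift Kq (heckeGen n r) x = lift Kq (heckeGen n r) y := by
  cases h with
  | quad i =>
    simp only [map_mul, map_add, map_sub, map_smul, map_one, map_zero, lift_ι_apply]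
    refine add_smul_one_mul_sub_inv_smul_one_eq_zero q_ne_zero ?_
    rw [heckeGen, ← MulOpposite.op_mul, qSwap_mul_self q_ne_zero]
    rfl
  | braid i j h =>
    obtain ⟨j, hj⟩ := j
    simp only at h
    subst h
    simp only [map_mul, lift_ι_apply, heckeGen, ← MulOpposite.op_mul, ← mul_assoc]
    refine congrArg MulOpposite.op (qSwap_braid q_ne_zero ?_ ?_ ?_) <;>
      simp only [ne_eq, Fin.mk.injEq] <;> omega
  | comm i j h =>
    simp only [map_mul, lift_ι_apply, heckeGen, ← MulOpposite.op_mul]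
    refine congrArg MulOpposite.op (qSwap_commute q ?_ ?_ ?_ ?_).eq.symm <;>
      simp only [ne_eq, Fin.mk.injEq] <;> omega

def heckeAction (n r : ℕ) : Hecke r →ₐ[Kq] (Module.End Kq (Vr n r))ᵐᵒᵖ :=
  RingQuot.liftAlgHom Kq ⟨lift Kq (heckeGen n r), fun _ _ => lift_heckeGen_eq_of_heckeRel⟩

theorem heckeAction_T (n r : ℕ) (i : Fin (r - 1)) : heckeAction n r (T r i) = heckeGen n r i := by
  rw [heckeAction, T, RingQuot.liftAlgHom_mkAlgHom_apply, lift_ι_apply]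

/-- The q-swap rule `M_f · T_{s_i}` extends to a well-defined right action of `H_q(S_r)`
on `V^{⊗r}`, i.e. an algebra homomorphism `Ψ` from the Hecke algebra to the opposite algebra
of endomorphisms of `V^{⊗r}`, with `Ψ(T_{s_i})` acting on each basis vector `M_f` by:
`M_{s_i f}` if `f(i) < f(i+1)`; `M_{s_i f} + (q⁻¹-q) M_f` if `f(i) > f(i+1)`;
`q⁻¹ M_f` if `f(i) = f(i+1)`. -/
theorem stmt4 (n r : ℕ) :
    ∃ Ψ : Hecke r →ₐ[Kq] (Module.End Kq (Vr n r))ᵐᵒᵖ,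
      ∀ (a : ℕ) (ha : a + 1 < r) (f : Fin r → Fin n),
        (Ψ (T r ⟨a, Nat.lt_sub_of_add_lt ha⟩)).unop (bVr n r f) =
          (let pa : Fin r := ⟨a, Nat.lt_of_succ_lt ha⟩
           let pb : Fin r := ⟨a + 1, ha⟩
           if f pa < f pb then bVr n r (f ∘ Equiv.swap pa pb)
           else if f pb < f pa then bVr n r (f ∘ Equiv.swap pa pb) + (q⁻¹ - q) • bVr n r f
           else q⁻¹ • bVr n r f) := by
  refine ⟨heckeAction n r, fun a ha f => ?_⟩
  simp only [heckeAction_T, heckeGen, MulOpposite.unop_op, bVr, Pi.basisFun_apply]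
  exact qSwap_single q _ _ f
end
end
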